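/- arXiv:2201.00344 — 4 statements merged into one kernel-verified Lean document; each statement's English description precedes it below -/
import Mathlib

section
/- Let a, r, δ be positive integers with a = r + δ - 1, δ ≥ 4, r ≥ 5, and let τ, τ' be integers coprime to a with 1 ≤ τ, τ' < a. If {i·τ mod a : 1 ≤ i ≤ δ-1} ⊆ {i·τ' mod a : 1 ≤ i ≤ δ}, then τ = τ'. -/
/-!
Put `c = τ / τ'` in `ZMod a`. The hypothesis says that the progression `c, 2c, …, (δ-1)c` lies in
`[1, δ]`; its terms are distinct, so it fills `[1, δ]` up to a single hole `x`. Adding `c` maps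
each term to the next one, so only the last term leaves `[1, δ] \ {x}` under the shift by `c`.
But if `2 ≤ c ≤ δ` and `a ≥ δ + 4`, the shift by `c` pushes at least two points of `[1, δ] \ {x}`
out of it: three points near the top of `[1, δ]` are pushed past `δ` (for `c = 2`: `δ - 1`, `δ`
and `x - 2`, which lands on the hole). Hence `c = 1`.
-/

open Finset

lemma le_one_of_unique_exit {a δ s x L : ℕ} (hδ : 4 ≤ δ) (ha : δ + 4 ≤ a) (hsδ : s ≤ δ)
    (hx : x ∈ Icc 1 δ)
    (hexit : ∀ y ∈ Icc 1 δ \ {x}, (y + s) % a ∉ Icc 1 δ \ {x} → y = L) : s ≤ 1 := by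
  have hexit' : ∀ y, 1 ≤ y → y ≤ δ → y + s < a → (δ < y + s ∨ y + s = x) → y = x ∨ y = L := by
    intro y hy₁ hy₂ hlt hout
    by_cases hyx : y = x
    · exact .inl hyx
    refine .inr (hexit y (by simp [hyx, hy₁, hy₂]) ?_)
    rw [Nat.mod_eq_of_lt hlt]
    simp only [mem_sdiff, mem_Icc, mem_singleton]
    omega
  rw [mem_Icc] at hx
  have := hexit' (min δ (a - 1 - s))
  have := hexit' (min δ (a - 1 - s) - 1)
  have := hexit' (min δ (a - 1 - s) - 2)
  have := hexit' δ
  have := hexit' (δ - 1)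
  have := hexit' (x - 2)
  omega

theorem ZMod.eq_one_of_val_mul_mem_Icc {a δ : ℕ} [NeZero a] (hδ : 4 ≤ δ) (ha : δ + 4 ≤ a)
    {c : ZMod a} (h : ∀ i ∈ Icc 1 (δ - 1), ((i : ZMod a) * c).val ∈ Icc 1 δ) : c = 1 := by
  set v : ℕ → ℕ := fun i => ((i : ZMod a) * c).val with hv
  have hinj : Set.InjOn v (Icc 1 (δ - 1)) := by
    intro i hi j hj hij
    by_contra hne
    wlog hlt : i < j generalizing i j
    · exact this hj hi hij.symm (Ne.symm hne) (by omega)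
    have hzero : ((j - i : ℕ) : ZMod a) * c = 0 := by
      rw [Nat.cast_sub hlt.le, sub_mul, ZMod.val_injective a hij, sub_self]
    simp only [coe_Icc, Set.mem_Icc] at hi hj
    simpa [hzero] using h (j - i) (mem_Icc.2 ⟨by omega, by omega⟩)
  set M := (Icc 1 (δ - 1)).image v
  have hMsub : M ⊆ Icc 1 δ := image_subset_iff.2 h
  obtain ⟨x, hx⟩ : ∃ x, Icc 1 δ \ M = {x} := by
    rw [← card_eq_one, card_sdiff_of_subset hMsub, card_image_of_injOn hinj]
    simp only [Nat.card_Icc]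
    omega
  have hxmem : x ∈ Icc 1 δ := (mem_sdiff.1 (hx ▸ mem_singleton_self x)).1
  have hM : M = Icc 1 δ \ {x} := by rw [← hx, Finset.sdiff_sdiff_eq_self hMsub]
  have hsucc : ∀ i ∈ Icc 1 (δ - 1), i ≠ δ - 1 → (v i + c.val) % a ∈ M := by
    intro i hi hne
    have hstep : (v i + c.val) % a = v (i + 1) := by
      simp only [hv, ← ZMod.val_add, Nat.cast_succ, add_mul, one_mul]
    rw [mem_Icc] at hi
    exact hstep ▸ mem_image_of_mem v (mem_Icc.2 ⟨by omega, by omega⟩)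
  have hc : c.val ∈ Icc 1 δ := by simpa [hv] using h 1 (mem_Icc.2 ⟨le_rfl, by omega⟩)
  have hc₁ : c.val ≤ 1 := by
    refine le_one_of_unique_exit hδ ha (mem_Icc.1 hc).2 hxmem (L := v (δ - 1)) ?_
    intro y hy hout
    rw [← hM] at hy hout
    obtain ⟨i, hi, rfl⟩ := mem_image.1 hy
    by_contra hne
    exact hout (hsucc i hi fun hi' => hne (hi' ▸ rfl))
  exact (ZMod.val_eq_one (by omega) c).1 (by simp only [mem_Icc] at hc; omega)

theorem stmt_2_general (a r δ τ τ' : ℕ) (ha : a = r + δ - 1) (hδ : 4 ≤ δ) (hr : 5 ≤ r)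
    (hτ' : Nat.gcd τ' a = 1)
    (h2 : τ < a) (h4 : τ' < a)
    (hsub : ∀ i, 1 ≤ i → i ≤ δ - 1 → ∃ j, 1 ≤ j ∧ j ≤ δ ∧ (i * τ) % a = (j * τ') % a) :
    τ = τ' := by
  have : NeZero a := ⟨by omega⟩
  set u := ZMod.unitOfCoprime τ' hτ'
  have hc : (τ : ZMod a) * ↑u⁻¹ = 1 := by
    refine ZMod.eq_one_of_val_mul_mem_Icc hδ (by omega) fun i hi => ?_
    obtain ⟨j, hj₁, hj₂, hj⟩ := hsub i (mem_Icc.1 hi).1 (mem_Icc.1 hi).2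
    have hij : (i : ZMod a) * τ = j * u := by
      rw [ZMod.coe_unitOfCoprime]
      exact_mod_cast (ZMod.natCast_eq_natCast_iff' _ _ a).2 hj
    rw [← mul_assoc, hij, Units.mul_inv_cancel_right, ZMod.val_cast_of_lt (by omega)]
    exact mem_Icc.2 ⟨hj₁, hj₂⟩
  have hττ' : (τ : ZMod a) = τ' := Units.mul_inv_eq_one.1 hc
  rwa [ZMod.natCast_eq_natCast_iff', Nat.mod_eq_of_lt h2, Nat.mod_eq_of_lt h4] at hττ'

theorem stmt_2 (a r δ τ τ' : ℕ) (ha : a = r + δ - 1) (hδ : 4 ≤ δ) (hr : 5 ≤ r)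
    (hτ : Nat.gcd τ a = 1) (hτ' : Nat.gcd τ' a = 1)
    (h1 : 1 ≤ τ) (h2 : τ < a) (h3 : 1 ≤ τ') (h4 : τ' < a)
    (hsub : ∀ i, 1 ≤ i → i ≤ δ - 1 → ∃ j, 1 ≤ j ∧ j ≤ δ ∧ (i * τ) % a = (j * τ') % a) :
    τ = τ' :=
  stmt_2_general a r δ τ τ' ha hδ hr hτ' h2 h4 hsub
end

section
/- Let a, r be positive integers with a = r + 2, r ≥ 4 (i.e., δ = 3), and let τ, τ' be integers coprime to a with 1 ≤ τ, τ' < a. If {τ mod a, 2τ mod a} ⊆ {τ' mod a, 2τ' mod a, 3τ' mod a}, then τ = τ'. -/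
theorem stmt_3 (a r τ τ' : ℕ) (ha : a = r + 2) (hr : 4 ≤ r)
    (hτ : Nat.gcd τ a = 1) (hτ' : Nat.gcd τ' a = 1)
    (h1 : 1 ≤ τ) (h2 : τ < a) (h3 : 1 ≤ τ') (h4 : τ' < a)
    (hsub : ({τ % a, (2 * τ) % a} : Finset ℕ) ⊆
      ({τ' % a, (2 * τ') % a, (3 * τ') % a} : Finset ℕ)) :
    τ = τ' := by
  have ha6 : 6 ≤ a := by omega
  have hane : NeZero a := ⟨by omega⟩
  -- extract memberships
  have hm1 : τ % a = τ' % a ∨ τ % a = (2 * τ') % a ∨ τ % a = (3 * τ') % a := by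
    have := hsub (by simp : τ % a ∈ ({τ % a, (2 * τ) % a} : Finset ℕ))
    simpa [Finset.mem_insert, Finset.mem_singleton] using this
  have hm2 : (2 * τ) % a = τ' % a ∨ (2 * τ) % a = (2 * τ') % a ∨
      (2 * τ) % a = (3 * τ') % a := by
    have := hsub (by simp : (2 * τ) % a ∈ ({τ % a, (2 * τ) % a} : Finset ℕ))
    simpa [Finset.mem_insert, Finset.mem_singleton] using this
  -- move to ZMod a
  have cast_of_mod : ∀ m n : ℕ, m % a = n % a → (m : ZMod a) = (n : ZMod a) := by
    intro m n h
    exact (ZMod.natCast_eq_natCast_iff m n a).mpr h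
  have hdvd : ∀ k : ℕ, 0 < k → k < a → ((k : ZMod a) * (τ' : ZMod a) ≠ 0) := by
    intro k hk hka h
    have hu : IsUnit (τ' : ZMod a) := by
      rw [ZMod.isUnit_iff_coprime]
      exact Nat.coprime_iff_gcd_eq_one.mp hτ'
    obtain ⟨u, hu⟩ := hu
    have h0 : (k : ZMod a) = 0 := by
      have := congrArg (· * ((u⁻¹ : (ZMod a)ˣ) : ZMod a)) h
      simpa [← hu, mul_assoc] using this
    have := (ZMod.natCast_eq_zero_iff k a).mp h0
    exact absurd (Nat.le_of_dvd hk this) (by omega)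
  have key : (τ : ZMod a) = (τ' : ZMod a) := by
    rcases hm1 with h | h | h
    · exact cast_of_mod _ _ h
    · -- τ ≡ 2τ'
      have e1 : (τ : ZMod a) = 2 * (τ' : ZMod a) := by
        have := cast_of_mod _ _ h; push_cast at this; exact this
      rcases hm2 with h' | h' | h' <;>
        [skip; skip; skip] <;>
        (have e2 := cast_of_mod _ _ h'; push_cast at e2; rw [e1] at e2; ring_nf at e2)
      · exfalso
        have : (3 : ZMod a) * (τ' : ZMod a) = 0 := by
          have : (4 : ZMod a) * τ' - 1 * τ' = 0 := by
            rw [sub_eq_zero]; push_cast; linear_combination e2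
          push_cast at this ⊢; linear_combination this
        exact hdvd 3 (by norm_num) (by omega) (by push_cast at this ⊢; exact this)
      · exfalso
        have : (2 : ZMod a) * (τ' : ZMod a) = 0 := by
          push_cast; linear_combination e2
        exact hdvd 2 (by norm_num) (by omega) (by push_cast at this ⊢; exact this)
      · exfalso
        have : (1 : ZMod a) * (τ' : ZMod a) = 0 := by
          push_cast; linear_combination e2
        exact hdvd 1 (by norm_num) (by omega) (by push_cast at this ⊢; exact this)
    · -- τ ≡ 3τ'
      have e1 : (τ : ZMod a) = 3 * (τ' : ZMod a) := by
        have := cast_of_mod _ _ h; push_cast at this; exact this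
      rcases hm2 with h' | h' | h' <;>
        (have e2 := cast_of_mod _ _ h'; push_cast at e2; rw [e1] at e2; ring_nf at e2)
      · exfalso
        have : (5 : ZMod a) * (τ' : ZMod a) = 0 := by
          push_cast; linear_combination e2
        exact hdvd 5 (by norm_num) (by omega) (by push_cast at this ⊢; exact this)
      · exfalso
        have : (4 : ZMod a) * (τ' : ZMod a) = 0 := by
          push_cast; linear_combination e2
        exact hdvd 4 (by norm_num) (by omega) (by push_cast at this ⊢; exact this)
      · exfalso
        have : (3 : ZMod a) * (τ' : ZMod a) = 0 := by
          push_cast; linear_combination e2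
        exact hdvd 3 (by norm_num) (by omega) (by push_cast at this ⊢; exact this)
  have := (ZMod.natCast_eq_natCast_iff τ τ' a).mp key
  unfold Nat.ModEq at this
  rw [Nat.mod_eq_of_lt h2, Nat.mod_eq_of_lt h4] at this
  exact this
end

section
/- Let F be a field, β₀ ∈ F of finite multiplicative order a, δ ≥ 2 with a ≥ δ + 2, and suppose β ∈ F also has order a, with {β₀, β₀², …, β₀^{δ-1}} = {β, β², …, β^{δ-1}} and {1, β₀, β₀², …, β₀^δ} = {1, β, β², …, β^δ}. Then β = β₀. -/
theorem stmt_12 (F : Type) [Field F] [DecidableEq F] (β₀ β : F) (a δ : ℕ)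
    (h₀ : orderOf β₀ = a) (hβ : orderOf β = a) (hδ : 2 ≤ δ) (ha : δ + 2 ≤ a)
    (hset1 : (Finset.Icc 1 (δ - 1)).image (fun i => β₀ ^ i)
           = (Finset.Icc 1 (δ - 1)).image (fun i => β ^ i))
    (hset2 : (Finset.Icc 0 δ).image (fun i => β₀ ^ i)
           = (Finset.Icc 0 δ).image (fun i => β ^ i)) :
    β = β₀ := by
  have key : ∀ (x : F), orderOf x = a → ∀ (s : Finset ℕ), (∀ i ∈ s, i ≤ δ) →
      ∀ i ∈ s, ∀ j ∈ s, x ^ i = x ^ j → i = j := by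
    intro x hx s hs i hi j hj hij
    have hxa : x ^ a = 1 := by rw [← hx]; exact pow_orderOf_eq_one x
    have hx0 : x ≠ 0 := by
      intro h
      rw [h, zero_pow (by omega)] at hxa
      exact one_ne_zero hxa.symm
    have main : ∀ i j : ℕ, i ≤ j → j ≤ δ → x ^ i = x ^ j → i = j := by
      intro i j hij hjδ he
      have h1 : x ^ i * x ^ (j - i) = x ^ i * 1 := by
        rw [mul_one, ← pow_add, he]
        congr 1
        omega
      have h2 : x ^ (j - i) = 1 := mul_left_cancel₀ (pow_ne_zero i hx0) h1
      have h3 := orderOf_dvd_of_pow_eq_one h2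
      rw [hx] at h3
      rcases Nat.eq_zero_or_pos (j - i) with h | h
      · omega
      · have := Nat.le_of_dvd h h3
        omega
    rcases le_total i j with h | h
    · exact main i j h (hs j hj) hij
    · exact (main j i h (hs i hi) hij.symm).symm
  have hsub1 : ∀ i ∈ Finset.Icc 1 (δ - 1), i ≤ δ := by
    intro i hi; simp [Finset.mem_Icc] at hi; omega
  have hsub2 : ∀ i ∈ Finset.Icc 0 δ, i ≤ δ := by
    intro i hi; simp [Finset.mem_Icc] at hi; omega
  have e1 : ∀ (x : F) (h : orderOf x = a),
      ∑ y ∈ (Finset.Icc 1 (δ - 1)).image (fun i => x ^ i), y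
        = ∑ i ∈ Finset.Icc 1 (δ - 1), x ^ i :=
    fun x h => Finset.sum_image (f := fun y => y) (key x h _ hsub1)
  have e2 : ∀ (x : F) (h : orderOf x = a),
      ∑ y ∈ (Finset.Icc 0 δ).image (fun i => x ^ i), y
        = ∑ i ∈ Finset.Icc 0 δ, x ^ i :=
    fun x h => Finset.sum_image (f := fun y => y) (key x h _ hsub2)
  have s1 : ∑ i ∈ Finset.Icc 1 (δ - 1), β₀ ^ i = ∑ i ∈ Finset.Icc 1 (δ - 1), β ^ i := by
    rw [← e1 β₀ h₀, hset1, e1 β hβ]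
  have s2 : ∑ i ∈ Finset.Icc 0 δ, β₀ ^ i = ∑ i ∈ Finset.Icc 0 δ, β ^ i := by
    rw [← e2 β₀ h₀, hset2, e2 β hβ]
  have hIcc : Finset.Icc 0 δ = insert 0 (insert δ (Finset.Icc 1 (δ - 1))) := by
    ext i; simp [Finset.mem_Icc]; omega
  have h0ni : (0 : ℕ) ∉ insert δ (Finset.Icc 1 (δ - 1)) := by
    simp [Finset.mem_Icc]; omega
  have hdni : δ ∉ Finset.Icc 1 (δ - 1) := by
    simp [Finset.mem_Icc]; omega
  have sum2 : ∀ x : F, ∑ i ∈ Finset.Icc 0 δ, x ^ i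
      = 1 + (x ^ δ + ∑ i ∈ Finset.Icc 1 (δ - 1), x ^ i) := by
    intro x
    rw [hIcc, Finset.sum_insert h0ni, Finset.sum_insert hdni, pow_zero]
  rw [sum2, sum2, s1] at s2
  have hpow : β₀ ^ δ = β ^ δ := by
    have := add_left_cancel s2
    exact add_right_cancel this
  have hrange : Finset.range δ = insert 0 (Finset.Icc 1 (δ - 1)) := by
    ext i; simp [Finset.mem_Icc]; omega
  have h0ni' : (0 : ℕ) ∉ Finset.Icc 1 (δ - 1) := by simp
  have geq : ∑ i ∈ Finset.range δ, β₀ ^ i = ∑ i ∈ Finset.range δ, β ^ i := by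
    rw [hrange, Finset.sum_insert h0ni', Finset.sum_insert h0ni', s1, pow_zero, pow_zero]
  have g0 : (∑ i ∈ Finset.range δ, β₀ ^ i) * (β₀ - 1) = β₀ ^ δ - 1 := geom_sum_mul β₀ δ
  have g1 : (∑ i ∈ Finset.range δ, β ^ i) * (β - 1) = β ^ δ - 1 := geom_sum_mul β δ
  have hne : (∑ i ∈ Finset.range δ, β₀ ^ i) ≠ 0 := by
    intro h
    rw [h, zero_mul] at g0
    have hone : β₀ ^ δ = 1 := by linear_combination -g0
    have hd := orderOf_dvd_of_pow_eq_one hone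
    rw [h₀] at hd
    have := Nat.le_of_dvd (by omega) hd
    omega
  have heq : (∑ i ∈ Finset.range δ, β₀ ^ i) * (β₀ - 1)
       = (∑ i ∈ Finset.range δ, β₀ ^ i) * (β - 1) := by
    rw [g0, geq, g1, hpow]
  have := mul_left_cancel₀ hne heq
  linear_combination -this
end

section
/- Let n, a, m be positive integers with n = a·m, and for i ∈ [0, m) let t_i be an integer coprime to a and z_i an integer such that the map i ↦ (z_i mod m) is a permutation of [0, m). Then the map μ: ℤ/nℤ → ℤ/nℤ given by μ(xm + i) = (x·m·t_i + z_i) mod n for x ∈ [0, a), i ∈ [0, m), is a bijection. -/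
theorem stmt_18 (n a m : ℕ) (ha : 0 < a) (hm : 0 < m) (hn : n = a * m)
    (t z : Fin m → ℕ) (ht : ∀ i, Nat.gcd (t i) a = 1)
    (hz : Function.Injective (fun i : Fin m => z i % m))
    (μ : ZMod n → ZMod n)
    (hμ : ∀ x < a, ∀ i : Fin m,
      μ (((x * m + (i : ℕ) : ℕ) : ZMod n)) = ((x * m * t i + z i : ℕ) : ZMod n)) :
    Function.Bijective μ := by
  subst hn
  have hn0 : 0 < a * m := Nat.mul_pos ha hm
  haveI : NeZero (a * m) := ⟨hn0.ne'⟩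
  refine Finite.injective_iff_bijective.mp ?_
  intro c1 c2 hc
  set x1 := (ZMod.val c1) / m with hx1
  set x2 := (ZMod.val c2) / m with hx2
  have hi1 : (ZMod.val c1) % m < m := Nat.mod_lt _ hm
  have hi2 : (ZMod.val c2) % m < m := Nat.mod_lt _ hm
  set i1 : Fin m := ⟨(ZMod.val c1) % m, hi1⟩
  set i2 : Fin m := ⟨(ZMod.val c2) % m, hi2⟩
  have hxa1 : x1 < a := Nat.div_lt_of_lt_mul (by have := ZMod.val_lt c1; exact lt_of_lt_of_eq this (mul_comm a m))
  have hxa2 : x2 < a := Nat.div_lt_of_lt_mul (by have := ZMod.val_lt c2; exact lt_of_lt_of_eq this (mul_comm a m))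
  have hrep1 : ((x1 * m + (i1 : ℕ) : ℕ) : ZMod (a*m)) = c1 := by
    show (((ZMod.val c1) / m * m + (ZMod.val c1) % m : ℕ) : ZMod (a*m)) = c1
    rw [Nat.div_add_mod']
    exact ZMod.natCast_rightInverse c1
  have hrep2 : ((x2 * m + (i2 : ℕ) : ℕ) : ZMod (a*m)) = c2 := by
    show (((ZMod.val c2) / m * m + (ZMod.val c2) % m : ℕ) : ZMod (a*m)) = c2
    rw [Nat.div_add_mod']
    exact ZMod.natCast_rightInverse c2
  rw [← hrep1, ← hrep2, hμ x1 hxa1 i1, hμ x2 hxa2 i2] at hc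
  have h := (ZMod.natCast_eq_natCast_iff _ _ _).mp hc
  -- step 1: i1 = i2
  have hmd : m ∣ a * m := ⟨a, mul_comm a m⟩
  have hmod : z i1 % m = z i2 % m := by
    have h' := Nat.ModEq.of_dvd hmd h
    have e1 : x1 * m * t i1 + z i1 = z i1 + (x1 * t i1) * m := by ring
    have e2 : x2 * m * t i2 + z i2 = z i2 + (x2 * t i2) * m := by ring
    rw [e1, e2] at h'
    simpa [Nat.ModEq, Nat.add_mul_mod_self_right] using h'
  have hii : i1 = i2 := hz hmod
  rw [hii] at h
  -- step 2: x1 = x2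
  have h2 : x1 * m * t i2 ≡ x2 * m * t i2 [MOD a * m] := h.add_right_cancel' _
  have h3 : x1 * t i2 * m ≡ x2 * t i2 * m [MOD a * m] := by
    have e1 : x1 * m * t i2 = x1 * t i2 * m := by ring
    have e2 : x2 * m * t i2 = x2 * t i2 * m := by ring
    rwa [e1, e2] at h2
  have h4 : x1 * t i2 ≡ x2 * t i2 [MOD a] :=
    Nat.ModEq.mul_right_cancel' hm.ne' h3
  have h5 : x1 ≡ x2 [MOD a] := h4.cancel_right_of_coprime (Nat.coprime_comm.mp (ht i2))
  have hx : x1 = x2 := by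
    have := h5
    unfold Nat.ModEq at this
    rwa [Nat.mod_eq_of_lt hxa1, Nat.mod_eq_of_lt hxa2] at this
  -- conclude
  apply ZMod.val_injective
  have hv1 : ZMod.val c1 = x1 * m + (i1 : ℕ) := (Nat.div_add_mod' _ _).symm
  have hv2 : ZMod.val c2 = x2 * m + (i2 : ℕ) := (Nat.div_add_mod' _ _).symm
  rw [hv1, hv2, hx, hii]
end
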